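/- arXiv:0804.4410 — 3 statements merged into one kernel-verified Lean document; each statement's English description precedes it below -/
import Mathlib

section
/- Let k be a finite field, r ∈ k^× a nonzero element, and w ∈ F_k a word of length l. Then w ∈ A_r if and only if for every α ∈ k the word wα (w with α appended on the right) lies in C_r. Moreover, if w ∈ C_r, then there exists a unique α ∈ k such that wα ∈ A_r. -/
/-- The monoid homomorphism π sending a word α₁…α_l over k to the matrix product
[[0,1],[−1,α₁]] ⋯ [[0,1],[−1,α_l]]. -/
def piWord {k : Type*} [Field k] (w : List k) : Matrix (Fin 2) (Fin 2) k :=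
  (w.map fun α => !![0, 1; -1, α]).prod

/-- A_r : words w with π(w) = [[a,b],[c,d]] satisfying d = b·r and b ≠ 0. -/
def Ar {k : Type*} [Field k] (r : k) : Set (List k) :=
  {w | piWord w 1 1 = piWord w 0 1 * r ∧ piWord w 0 1 ≠ 0}

/-!
Write `π(w) = [[a, b], [c, d]]`. Appending `α` multiplies on the right by `[[0, 1], [-1, α]]`, so
the right column of `π(wα)` is `(a + bα, c + dα)`. For any word, `b = 0` together with `d = br`
would make the right column vanish, against `det π = 1`; so membership in `A_r` is just `d = br`,
and `wα ∈ A_r` becomes the affine equation `(d - br) α = ar - c`. If `w ∈ A_r` the leading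
coefficient vanishes while `b (ar - c) = ad - bc = 1`, so there is no solution; if `w ∉ A_r` the
leading coefficient is nonzero and the solution is unique.
-/

section

variable {k : Type*} [Field k]

lemma piWord_append (w : List k) (α : k) :
    piWord (w ++ [α]) = piWord w * !![0, 1; -1, α] := by
  simp [piWord]

lemma det_piWord (w : List k) : (piWord w).det = 1 := by
  induction w with
  | nil => simp [piWord]
  | cons x xs ih =>
    have hx : piWord (x :: xs) = !![0, 1; -1, x] * piWord xs := by simp [piWord]
    rw [hx, Matrix.det_mul, ih, mul_one, Matrix.det_fin_two_of]
    ring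

lemma piWord_det_entries (w : List k) :
    piWord w 0 0 * piWord w 1 1 - piWord w 0 1 * piWord w 1 0 = 1 := by
  rw [← Matrix.det_fin_two, det_piWord]

lemma piWord_append_apply_zero_one (w : List k) (α : k) :
    piWord (w ++ [α]) 0 1 = piWord w 0 0 + piWord w 0 1 * α := by
  simp [piWord_append, Matrix.mul_apply, Fin.sum_univ_two]

lemma piWord_append_apply_one_one (w : List k) (α : k) :
    piWord (w ++ [α]) 1 1 = piWord w 1 0 + piWord w 1 1 * α := by
  simp [piWord_append, Matrix.mul_apply, Fin.sum_univ_two]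

lemma mem_Ar_of_apply_one_one_eq {r : k} {w : List k}
    (h : piWord w 1 1 = piWord w 0 1 * r) : w ∈ Ar r := by
  refine ⟨h, fun hb => ?_⟩
  have hdet := piWord_det_entries w
  rw [h, hb] at hdet
  simp at hdet

lemma append_mem_Ar_iff (r : k) (w : List k) (α : k) :
    w ++ [α] ∈ Ar r ↔
      (piWord w 1 1 - piWord w 0 1 * r) * α = piWord w 0 0 * r - piWord w 1 0 := by
  refine ⟨fun h => ?_, fun h => mem_Ar_of_apply_one_one_eq ?_⟩
  · have he := h.1
    rw [piWord_append_apply_zero_one, piWord_append_apply_one_one] at he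
    linear_combination he
  · rw [piWord_append_apply_zero_one, piWord_append_apply_one_one]
    linear_combination h

lemma append_notMem_Ar {r : k} {w : List k} (hw : w ∈ Ar r) (α : k) : w ++ [α] ∉ Ar r := by
  intro h
  rw [append_mem_Ar_iff, hw.1, sub_self, zero_mul] at h
  have hdet := piWord_det_entries w
  rw [hw.1] at hdet
  exact one_ne_zero (by linear_combination -hdet - piWord w 0 1 * h)

lemma existsUnique_append_mem_Ar {r : k} {w : List k} (hw : w ∉ Ar r) :
    ∃! α : k, w ++ [α] ∈ Ar r := by
  have hne : piWord w 1 1 - piWord w 0 1 * r ≠ 0 := fun h0 =>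
    hw (mem_Ar_of_apply_one_one_eq (sub_eq_zero.mp h0))
  simp only [append_mem_Ar_iff]
  refine ⟨(piWord w 0 0 * r - piWord w 1 0) / (piWord w 1 1 - piWord w 0 1 * r), ?_, ?_⟩
  · exact mul_div_cancel₀ _ hne
  · intro α hα
    rw [eq_div_iff hne, mul_comm, hα]

end

theorem stmt1_general {k : Type*} [Field k] (r : k) (w : List k) :
    (w ∈ Ar r ↔ ∀ α : k, w ++ [α] ∉ Ar r) ∧
    (w ∉ Ar r → ∃! α : k, w ++ [α] ∈ Ar r) := by
  refine ⟨⟨append_notMem_Ar, fun hall => ?_⟩, existsUnique_append_mem_Ar⟩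
  by_contra hw
  obtain ⟨α, hα, -⟩ := existsUnique_append_mem_Ar hw
  exact hall α hα

theorem stmt1 {k : Type*} [Field k] [Fintype k] (r : k) (hr : r ≠ 0)
    (l : ℕ) (w : List k) (hw : w.length = l) :
    (w ∈ Ar r ↔ ∀ α : k, w ++ [α] ∉ Ar r) ∧
    (w ∉ Ar r → ∃! α : k, w ++ [α] ∈ Ar r) :=
  stmt1_general r w
end

section
/- Let k be a finite field, r ∈ k^× a nonzero element, and w ∈ F_k a word with π(w) = [[a,b],[c,d]]. (i) If w ∈ C_r, then d = 0 if and only if for every α ∈ k the word αw (α prepended on the left) lies in C_r. (ii) If w ∈ A_r, then there exists a unique α ∈ k (namely α = r + r⁻¹) such that αw ∈ A_r. -/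
/-!
Prepending `α` multiplies `π(w) = [[a,b],[c,d]]` on the left by `[[0,1],[-1,α]]`, giving
`[[c,d],[αc - a, αd - b]]`. Hence `αw ∈ A_r` says exactly `d ≠ 0` and `αd - b = dr`, a linear
equation in `α`. It is solvable iff `d ≠ 0`, and then only by `α = r + b/d`; when `w ∈ A_r` we have
`d = br`, so this solution is `r + r⁻¹`.
-/

section

variable {k : Type*} [Field k]

theorem piWord_cons (α : k) (w : List k) :
    piWord (α :: w) = !![0, 1; -1, α] * piWord w := by
  simp [piWord]

theorem piWord_cons_zero_one (α : k) (w : List k) :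
    piWord (α :: w) 0 1 = piWord w 1 1 := by
  simp [piWord_cons, Matrix.mul_apply, Fin.sum_univ_two]

theorem piWord_cons_one_one (α : k) (w : List k) :
    piWord (α :: w) 1 1 = α * piWord w 1 1 - piWord w 0 1 := by
  simp [piWord_cons, Matrix.mul_apply, Fin.sum_univ_two]
  ring

theorem cons_mem_Ar_iff (r α : k) (w : List k) :
    α :: w ∈ Ar r ↔ α * piWord w 1 1 - piWord w 0 1 = piWord w 1 1 * r ∧ piWord w 1 1 ≠ 0 := by
  simp only [Ar, Set.mem_ofPred_eq, piWord_cons_zero_one, piWord_cons_one_one]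

theorem forall_cons_not_mem_Ar_iff (r : k) (w : List k) :
    (∀ α : k, α :: w ∉ Ar r) ↔ piWord w 1 1 = 0 := by
  refine ⟨fun h => ?_, fun hd α hα => ((cons_mem_Ar_iff r α w).1 hα).2 hd⟩
  by_contra hd
  refine h (r + piWord w 0 1 / piWord w 1 1) ((cons_mem_Ar_iff _ _ _).2 ⟨?_, hd⟩)
  field_simp
  ring

theorem cons_mem_Ar_iff_of_mem {r : k} (hr : r ≠ 0) {w : List k} (hw : w ∈ Ar r) (α : k) :
    α :: w ∈ Ar r ↔ α = r + r⁻¹ := by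
  obtain ⟨hdb, hb⟩ := hw
  have hd : piWord w 1 1 ≠ 0 := hdb ▸ mul_ne_zero hb hr
  rw [cons_mem_Ar_iff, and_iff_left hd, hdb]
  constructor
  · intro h
    have hα : piWord w 0 1 * (α * r) = piWord w 0 1 * (r * r + 1) := by linear_combination h
    field_simp
    linear_combination mul_left_cancel₀ hb hα
  · rintro rfl
    field_simp
    ring

end

theorem stmt2_general {k : Type*} [Field k] (r : k) (hr : r ≠ 0)
    (w : List k) (a b c d : k) (hw : piWord w = !![a, b; c, d]) :
    (w ∉ Ar r → (d = 0 ↔ ∀ α : k, α :: w ∉ Ar r)) ∧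
    (w ∈ Ar r → ∀ α : k, α :: w ∈ Ar r ↔ α = r + r⁻¹) := by
  have hd : piWord w 1 1 = d := by simp [hw]
  refine ⟨fun _ => ?_, fun hA => cons_mem_Ar_iff_of_mem hr hA⟩
  rw [forall_cons_not_mem_Ar_iff, hd]

theorem stmt2 {k : Type*} [Field k] [Fintype k] (r : k) (hr : r ≠ 0)
    (w : List k) (a b c d : k) (hw : piWord w = !![a, b; c, d]) :
    (w ∉ Ar r → (d = 0 ↔ ∀ α : k, α :: w ∉ Ar r)) ∧
    (w ∈ Ar r → ∀ α : k, α :: w ∈ Ar r ↔ α = r + r⁻¹) :=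
  stmt2_general r hr w a b c d hw
end

section
/- Let N be a positive integer. The set S' = { [[0,1],[−1,α]] : α ∈ ℤ/Nℤ } generates SL₂(ℤ/Nℤ) as a semigroup; that is, every element of SL₂(ℤ/Nℤ) can be written as a product of a nonempty finite sequence of matrices of the form [[0,1],[−1,α]] with α ∈ ℤ/Nℤ. -/
/-!
Write `S = [[0,1],[-1,0]]` and `T β = [[1,β],[0,1]]`. Since `[[0,1],[-1,α]] = S * T (-α)` and
`S⁴ = 1`, the semigroup generated by these matrices contains `S⁻¹ = S³` and every `T β`, hence
all their products. Any `g = [[a,b],[c,d]]` is reduced to an upper triangular matrix by the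
Euclidean algorithm on the first column: `(T q * S)⁻¹ * g` has lower left entry `a - q c`, and
in `ℤ/Nℤ` one can choose `q` with `(a - q c).val < c.val`. An upper triangular matrix of
determinant one is an explicit word in `S`, `S⁻¹` and the `T β`.
-/

/-- The matrix [[0,1],[−1,α]] as an element of SL₂(ℤ/Nℤ). -/
def genMat (N : ℕ) (α : ZMod N) : Matrix.SpecialLinearGroup (Fin 2) (ZMod N) :=
  ⟨!![0, 1; -1, α], by simp [Matrix.det_fin_two_of]⟩

-- On `ZMod 0 = ℤ` the function `ZMod.val` is `Int.natAbs`, so the division step works for every `N`.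
theorem ZMod.exists_val_sub_mul_lt {N : ℕ} (a c : ZMod N) (hc : c ≠ 0) :
    ∃ q, (a - q * c).val < c.val := by
  cases N with
  | zero =>
    change ℤ at a c
    refine ⟨a / c, ?_⟩
    have h := Int.emod_lt_abs a hc
    have h0 := Int.emod_nonneg a hc
    change (a - a / c * c).natAbs < c.natAbs
    rw [mul_comm, ← Int.emod_def]
    rw [Int.abs_eq_natAbs] at h
    omega
  | succ n =>
    refine ⟨(a.val / c.val : ℕ), ?_⟩
    have hrem : a - (a.val / c.val : ℕ) * c = (a.val % c.val : ℕ) := by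
      have ha : a = ((a.val % c.val + c.val * (a.val / c.val) : ℕ) : ZMod (n + 1)) := by
        rw [Nat.mod_add_div, ZMod.natCast_zmod_val]
      nth_rewrite 1 [ha]
      push_cast
      rw [ZMod.natCast_zmod_val]
      ring
    rw [hrem, ZMod.val_natCast]
    exact (Nat.mod_le _ _).trans_lt (Nat.mod_lt _ (ZMod.val_pos.mpr hc))

open Matrix MatrixGroups

section

variable {R : Type*} [CommRing R]

def sl2Gen (α : R) : SL(2, R) := ⟨!![0, 1; -1, α], by simp [det_fin_two_of]⟩

def sl2Shear (β : R) : SL(2, R) := ⟨!![1, β; 0, 1], by simp [det_fin_two_of]⟩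

@[simp]
theorem coe_sl2Gen (α : R) : (sl2Gen α : Matrix (Fin 2) (Fin 2) R) = !![0, 1; -1, α] := rfl

@[simp]
theorem coe_sl2Shear (β : R) : (sl2Shear β : Matrix (Fin 2) (Fin 2) R) = !![1, β; 0, 1] := rfl

variable (R) in
def sl2GenSubmonoid : Submonoid SL(2, R) := MonoidHom.mrange (FreeMonoid.lift (sl2Gen (R := R)))

theorem sl2Gen_mem (α : R) : sl2Gen α ∈ sl2GenSubmonoid R := ⟨FreeMonoid.of α, rfl⟩

theorem sl2Gen_zero_pow_four : sl2Gen (0 : R) ^ 4 = 1 := by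
  ext : 1
  simp [pow_succ, one_fin_two]

theorem sl2Gen_zero_inv_mem : (sl2Gen (0 : R))⁻¹ ∈ sl2GenSubmonoid R := by
  rw [inv_eq_of_mul_eq_one_right (by rw [← pow_succ', sl2Gen_zero_pow_four])]
  exact pow_mem (sl2Gen_mem 0) 3

theorem sl2Gen_eq_mul_sl2Shear (α : R) : sl2Gen α = sl2Gen 0 * sl2Shear (-α) := by
  ext : 1
  simp

theorem sl2Shear_mem (β : R) : sl2Shear β ∈ sl2GenSubmonoid R := by
  rw [← inv_mul_cancel_left (sl2Gen 0) (sl2Shear β), ← neg_neg β, ← sl2Gen_eq_mul_sl2Shear]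
  exact mul_mem sl2Gen_zero_inv_mem (sl2Gen_mem _)

theorem mem_sl2GenSubmonoid_of_lowerLeft_eq_zero (g : SL(2, R)) (hg : g 1 0 = 0) :
    g ∈ sl2GenSubmonoid R := by
  have hdet : g 0 0 * g 1 1 = 1 := by
    have := g.det_coe
    rwa [det_fin_two, hg, mul_zero, sub_zero] at this
  -- With `a d = 1`: `diag(a, d) = T a * S * T d * S⁻¹ * T a * S⁻¹` and `g = diag(a, d) * T (d * b)`.
  have key : g = sl2Shear (g 0 0) * sl2Gen 0 * sl2Shear (g 1 1) * (sl2Gen 0)⁻¹ *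
      sl2Shear (g 0 0) * (sl2Gen 0)⁻¹ * sl2Shear (g 1 1 * g 0 1) := by
    ext i j
    fin_cases i <;> fin_cases j <;>
      simp [adjugate_fin_two, mul_apply, Fin.sum_univ_two, hg, mul_comm (g 1 1), hdet]
    linear_combination (-g 0 1) * hdet
  rw [key]
  have hS := sl2Gen_mem (0 : R)
  have hS' := sl2Gen_zero_inv_mem (R := R)
  exact mul_mem (mul_mem (mul_mem (mul_mem (mul_mem (mul_mem (sl2Shear_mem _) hS)
    (sl2Shear_mem _)) hS') (sl2Shear_mem _)) hS') (sl2Shear_mem _)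

theorem lowerLeft_inv_sl2Shear_mul_sl2Gen_mul (q : R) (g : SL(2, R)) :
    ((sl2Shear q * sl2Gen 0)⁻¹ * g) 1 0 = g 0 0 - q * g 1 0 := by
  simp [adjugate_fin_two, mul_apply]
  ring

theorem sl2GenSubmonoid_eq_top (f : R → ℕ) (hf : ∀ a c : R, c ≠ 0 → ∃ q, f (a - q * c) < f c) :
    sl2GenSubmonoid R = ⊤ := by
  refine eq_top_iff.2 fun g _ => ?_
  induction hn : f (g 1 0) using Nat.strong_induction_on generalizing g with
  | _ n ih =>
  by_cases hc : g 1 0 = 0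
  · exact mem_sl2GenSubmonoid_of_lowerLeft_eq_zero g hc
  obtain ⟨q, hq⟩ := hf (g 0 0) (g 1 0) hc
  rw [← mul_inv_cancel_left (sl2Shear q * sl2Gen 0) g]
  refine mul_mem (mul_mem (sl2Shear_mem q) (sl2Gen_mem 0)) (ih _ (hn ▸ hq) _ trivial ?_)
  rw [lowerLeft_inv_sl2Shear_mul_sl2Gen_mul]

theorem exists_list_prod_sl2Gen_eq (f : R → ℕ) (hf : ∀ a c : R, c ≠ 0 → ∃ q, f (a - q * c) < f c)
    (g : SL(2, R)) : ∃ l : List R, l ≠ [] ∧ (l.map sl2Gen).prod = g := by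
  obtain ⟨w, hw⟩ : g ∈ sl2GenSubmonoid R := sl2GenSubmonoid_eq_top f hf ▸ Submonoid.mem_top g
  -- `S⁴ = 1`, so prefixing four copies of `S` makes the word nonempty.
  refine ⟨[0, 0, 0, 0] ++ w.toList, by simp, ?_⟩
  rw [List.map_append, List.prod_append, ← FreeMonoid.lift_apply, hw]
  have h4 : ([0, 0, 0, 0].map sl2Gen).prod = sl2Gen (0 : R) ^ 4 := by
    simp [pow_succ, mul_assoc]
  rw [h4, sl2Gen_zero_pow_four, one_mul]

end

theorem stmt8_general (N : ℕ) (g : Matrix.SpecialLinearGroup (Fin 2) (ZMod N)) :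
    ∃ l : List (ZMod N), l ≠ [] ∧ (l.map (genMat N)).prod = g :=
  exists_list_prod_sl2Gen_eq ZMod.val ZMod.exists_val_sub_mul_lt g

theorem stmt8 (N : ℕ) (hN : 0 < N) (g : Matrix.SpecialLinearGroup (Fin 2) (ZMod N)) :
    ∃ l : List (ZMod N), l ≠ [] ∧ (l.map (genMat N)).prod = g :=
  stmt8_general N g
end
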